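/- arXiv:1902.01891 — 7 statements merged into one kernel-verified Lean document; each statement's English description precedes it below -/
import Mathlib

section
/- Let F be a field with char(F) ≠ 2 and let * be an involution of the first kind on UT_2(F), i.e., an F-linear map *: UT_2(F) → UT_2(F) with (uv)* = v*u* and (u*)* = u for all u, v, which fixes every element of the center of UT_2(F). Then (UT_2(F), *) is isomorphic as an algebra with involution either to (UT_2(F), ⋆) or to (UT_2(F), s); moreover, (UT_2(F), ⋆) and (UT_2(F), s) are not isomorphic as algebras with involution. -/
/-!
An anti-automorphism `σ` of `UT₂(F)` fixing `1` is determined by `p = σ e₁₁` and `n = σ e₁₂`.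
Since `n² = 0`, `n = y e₁₂`, and `σ n = e₁₂` gives `y² = 1`; then `p n = 0` and `n p = n`
force `p = e₂₂ + t e₁₂`. So `σ` swaps the diagonal entries and sends the corner `c` to
`y c + t (a - b)`, and `σ² = id` gives `t (y - 1) = 0`. For `y = -1` this is `s`; for `y = 1`,
conjugation by `(1, -t/2; 0, 1)` carries `σ` to `⋆`. Finally, `⋆` fixes the nonzero square-zero
element `e₁₂`, whereas a square-zero element fixed by `s` has zero diagonal and corner `c = -c`,
so it vanishes.
-/

open scoped BigOperators

set_option maxHeartbeats 1000000
set_option synthInstance.maxHeartbeats 400000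

/-- The algebra of 2×2 upper triangular matrices over `F`. -/
def UT2 (F : Type*) [Field F] : Subalgebra F (Matrix (Fin 2) (Fin 2) F) where
  carrier := {M | M 1 0 = 0}
  mul_mem' := by
    intro a b ha hb
    simp only [Set.mem_setOf_eq] at *
    rw [Matrix.mul_apply, Fin.sum_univ_two, ha, hb]
    ring
  one_mem' := by simp [Matrix.one_apply]
  add_mem' := by
    intro a b ha hb
    simp only [Set.mem_setOf_eq] at *
    simp [Matrix.add_apply, ha, hb]
  zero_mem' := by simp
  algebraMap_mem' := by
    intro r
    simp [Matrix.algebraMap_matrix_apply]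

theorem mem_UT2 (F : Type*) [Field F] {M : Matrix (Fin 2) (Fin 2) F} :
    M ∈ UT2 F ↔ M 1 0 = 0 := Iff.rfl

/-- The involution `⋆` on `UT2 F`: `(a c; 0 b) ↦ (b c; 0 a)`. -/
def starUT (F : Type*) [Field F] (M : ↥(UT2 F)) : ↥(UT2 F) :=
  ⟨!![M.1 1 1, M.1 0 1; 0, M.1 0 0], by rw [mem_UT2]; simp⟩

/-- The involution `s` on `UT2 F`: `(a c; 0 b) ↦ (b -c; 0 a)`. -/
def starS (F : Type*) [Field F] (M : ↥(UT2 F)) : ↥(UT2 F) :=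
  ⟨!![M.1 1 1, -(M.1 0 1); 0, M.1 0 0], by rw [mem_UT2]; simp⟩

/-- The free unital associative `F`-algebra `F⟨Y ∪ Z⟩` on the variables
`y_0, y_1, …` (indexed by `Sum.inl`) and `z_0, z_1, …` (indexed by `Sum.inr`). -/
abbrev FA (F : Type*) [Field F] := FreeAlgebra F (ℕ ⊕ ℕ)

noncomputable def yv (F : Type*) [Field F] (i : ℕ) : FA F := FreeAlgebra.ι F (Sum.inl i)
noncomputable def zv (F : Type*) [Field F] (i : ℕ) : FA F := FreeAlgebra.ι F (Sum.inr i)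

noncomputable def fStarAux (F : Type*) [Field F] : FA F →ₐ[F] (FA F)ᵐᵒᵖ :=
  FreeAlgebra.lift F fun v =>
    MulOpposite.op (Sum.elim (fun i => FreeAlgebra.ι F (Sum.inl i))
      (fun i => -FreeAlgebra.ι F (Sum.inr i)) v)

/-- The involution `*` on `F⟨Y ∪ Z⟩`: the unique `F`-linear anti-automorphism
with `y_i* = y_i` and `z_i* = -z_i`. -/
noncomputable def fStar (F : Type*) [Field F] (f : FA F) : FA F := (fStarAux F f).unop

/-- A symmetric polynomial of `F⟨Y ∪ Z⟩`. -/
def IsSym (F : Type*) [Field F] (f : FA F) : Prop := fStar F f = f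
/-- A skew polynomial of `F⟨Y ∪ Z⟩`. -/
def IsSkew (F : Type*) [Field F] (f : FA F) : Prop := fStar F f = -f

/-- A substitution relative to an involution `σ` on `UT2 F`: an algebra homomorphism
sending each `y_i` to a symmetric element and each `z_i` to a skew-symmetric element. -/
def IsSubstWith (F : Type*) [Field F] (σ : ↥(UT2 F) → ↥(UT2 F))
    (φ : FA F →ₐ[F] ↥(UT2 F)) : Prop :=
  (∀ i, σ (φ (yv F i)) = φ (yv F i)) ∧ (∀ i, σ (φ (zv F i)) = -(φ (zv F i)))

/-- The `*`-polynomial identities of `(UT2 F, σ)`. -/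
def IdWith (F : Type*) [Field F] (σ : ↥(UT2 F) → ↥(UT2 F)) : Submodule F (FA F) where
  carrier := {f | ∀ φ : FA F →ₐ[F] ↥(UT2 F), IsSubstWith F σ φ → φ f = 0}
  add_mem' := by
    intro a b ha hb φ hφ
    rw [map_add, ha φ hφ, hb φ hφ, add_zero]
  zero_mem' := by intro φ _; exact map_zero φ
  smul_mem' := by
    intro c x hx φ hφ
    rw [map_smul, hx φ hφ, smul_zero]

/-- The `*`-central polynomials of `(UT2 F, σ)`. -/
def CWith (F : Type*) [Field F] (σ : ↥(UT2 F) → ↥(UT2 F)) : Submodule F (FA F) where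
  carrier := {f | ∀ φ : FA F →ₐ[F] ↥(UT2 F), IsSubstWith F σ φ →
    φ f ∈ Subalgebra.center F ↥(UT2 F)}
  add_mem' := by
    intro a b ha hb φ hφ
    rw [map_add]; exact add_mem (ha φ hφ) (hb φ hφ)
  zero_mem' := by intro φ _; rw [map_zero]; exact zero_mem _
  smul_mem' := by
    intro c x hx φ hφ
    rw [map_smul]; exact Subalgebra.smul_mem _ (hx φ hφ) c

/-- `⟨z₁z₂⟩^{TS(*)}`: the `F`-linear span of all products of two skew polynomials. -/
def TSz (F : Type*) [Field F] : Submodule F (FA F) :=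
  Submodule.span F {f : FA F | ∃ u v, IsSkew F u ∧ IsSkew F v ∧ f = u * v}


namespace UT2

variable {F : Type*} [Field F]

def mk (a c b : F) : ↥(UT2 F) := ⟨!![a, c; 0, b], by simp [mem_UT2]⟩

def e00 (u : ↥(UT2 F)) : F := u.1 0 0
def e01 (u : ↥(UT2 F)) : F := u.1 0 1
def e11 (u : ↥(UT2 F)) : F := u.1 1 1

theorem ext_entries {u v : ↥(UT2 F)} (h00 : e00 u = e00 v) (h01 : e01 u = e01 v)
    (h11 : e11 u = e11 v) : u = v := by
  apply Subtype.ext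
  ext i j
  fin_cases i <;> fin_cases j
  · exact h00
  · exact h01
  · exact u.2.trans v.2.symm
  · exact h11

@[simp] theorem e00_mk (a c b : F) : e00 (mk a c b) = a := rfl
@[simp] theorem e01_mk (a c b : F) : e01 (mk a c b) = c := rfl
@[simp] theorem e11_mk (a c b : F) : e11 (mk a c b) = b := rfl

@[simp] theorem e00_mul (u v : ↥(UT2 F)) : e00 (u * v) = e00 u * e00 v := by
  simp [e00, Matrix.mul_apply, (mem_UT2 F).1 v.2]

@[simp] theorem e01_mul (u v : ↥(UT2 F)) : e01 (u * v) = e00 u * e01 v + e01 u * e11 v := by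
  simp [e00, e01, e11, Matrix.mul_apply]

@[simp] theorem e11_mul (u v : ↥(UT2 F)) : e11 (u * v) = e11 u * e11 v := by
  simp [e11, Matrix.mul_apply, (mem_UT2 F).1 u.2]

@[simp] theorem e00_add (u v : ↥(UT2 F)) : e00 (u + v) = e00 u + e00 v := rfl
@[simp] theorem e01_add (u v : ↥(UT2 F)) : e01 (u + v) = e01 u + e01 v := rfl
@[simp] theorem e11_add (u v : ↥(UT2 F)) : e11 (u + v) = e11 u + e11 v := rfl
@[simp] theorem e00_sub (u v : ↥(UT2 F)) : e00 (u - v) = e00 u - e00 v := rfl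
@[simp] theorem e01_sub (u v : ↥(UT2 F)) : e01 (u - v) = e01 u - e01 v := rfl
@[simp] theorem e11_sub (u v : ↥(UT2 F)) : e11 (u - v) = e11 u - e11 v := rfl
@[simp] theorem e00_smul (r : F) (u : ↥(UT2 F)) : e00 (r • u) = r * e00 u := rfl
@[simp] theorem e01_smul (r : F) (u : ↥(UT2 F)) : e01 (r • u) = r * e01 u := rfl
@[simp] theorem e11_smul (r : F) (u : ↥(UT2 F)) : e11 (r • u) = r * e11 u := rfl
@[simp] theorem e00_zero : e00 (0 : ↥(UT2 F)) = 0 := rfl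
@[simp] theorem e01_zero : e01 (0 : ↥(UT2 F)) = 0 := rfl
@[simp] theorem e11_zero : e11 (0 : ↥(UT2 F)) = 0 := rfl

@[simp] theorem e00_algebraMap (r : F) : e00 (algebraMap F ↥(UT2 F) r) = r := by
  simp [e00, Matrix.algebraMap_matrix_apply]
@[simp] theorem e01_algebraMap (r : F) : e01 (algebraMap F ↥(UT2 F) r) = 0 := by
  simp [e01, Matrix.algebraMap_matrix_apply]
@[simp] theorem e11_algebraMap (r : F) : e11 (algebraMap F ↥(UT2 F) r) = r := by
  simp [e11, Matrix.algebraMap_matrix_apply]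

@[simp] theorem e00_one : e00 (1 : ↥(UT2 F)) = 1 := by simp [e00]
@[simp] theorem e01_one : e01 (1 : ↥(UT2 F)) = 0 := by simp [e01]
@[simp] theorem e11_one : e11 (1 : ↥(UT2 F)) = 1 := by simp [e11]

theorem starUT_eq (u : ↥(UT2 F)) : starUT F u = mk (e11 u) (e01 u) (e00 u) := rfl
theorem starS_eq (u : ↥(UT2 F)) : starS F u = mk (e11 u) (-e01 u) (e00 u) := rfl

def E00 : ↥(UT2 F) := mk 1 0 0
def E01 : ↥(UT2 F) := mk 0 1 0

theorem E01_mul_E01 : (E01 : ↥(UT2 F)) * E01 = 0 := by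
  apply ext_entries <;> simp [E01]

theorem E00_mul_E01 : (E00 : ↥(UT2 F)) * E01 = E01 := by
  apply ext_entries <;> simp [E00, E01]

theorem E01_mul_E00 : (E01 : ↥(UT2 F)) * E00 = 0 := by
  apply ext_entries <;> simp [E00, E01]

theorem E01_ne_zero : (E01 : ↥(UT2 F)) ≠ 0 := fun h => by
  simpa [E01] using congrArg e01 h

theorem linearMap_apply_eq_entries (σ : ↥(UT2 F) →ₗ[F] ↥(UT2 F)) (u : ↥(UT2 F)) :
    σ u = e00 u • σ E00 + e01 u • σ E01 + e11 u • (σ 1 - σ E00) := by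
  have hu : u = e00 u • E00 + e01 u • E01 + e11 u • (1 - E00) := by
    apply ext_entries <;> simp [E00, E01]
  conv_lhs => rw [hu]
  simp only [map_add, map_smul, map_sub]

def flip (y t : F) (u : ↥(UT2 F)) : ↥(UT2 F) :=
  mk (e11 u) (y * e01 u + t * (e00 u - e11 u)) (e00 u)

/-- Conjugation by the unit `(1 t; 0 1)`. -/
def shear (t : F) : ↥(UT2 F) ≃ₐ[F] ↥(UT2 F) where
  toFun u := mk (e00 u) (e01 u + t * (e11 u - e00 u)) (e11 u)
  invFun u := mk (e00 u) (e01 u - t * (e11 u - e00 u)) (e11 u)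
  left_inv u := by apply ext_entries <;> simp
  right_inv u := by apply ext_entries <;> simp
  map_mul' u v := by apply ext_entries <;> simp; ring
  map_add' u v := by apply ext_entries <;> simp; ring
  commutes' r := by apply ext_entries <;> simp

theorem shear_apply (t : F) (u : ↥(UT2 F)) :
    shear t u = mk (e00 u) (e01 u + t * (e11 u - e00 u)) (e11 u) := rfl

theorem shear_flip_one (h2 : (2 : F) ≠ 0) (t : F) (u : ↥(UT2 F)) :
    shear (-(t / 2)) (flip 1 t u) = starUT F (shear (-(t / 2)) u) := by
  apply ext_entries <;> simp only [shear_apply, flip, starUT_eq, e00_mk, e01_mk, e11_mk]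
  field_simp
  ring

section AntiAutomorphism

variable {σ : ↥(UT2 F) →ₗ[F] ↥(UT2 F)}

theorem exists_eq_flip (hmul : ∀ u v, σ (u * v) = σ v * σ u) (hinv : ∀ u, σ (σ u) = u)
    (hone : σ 1 = 1) : ∃ y t : F, y * y = 1 ∧ ∀ u, σ u = flip y t u := by
  obtain ⟨p, hp⟩ : ∃ p, σ E00 = p := ⟨_, rfl⟩
  obtain ⟨n, hn⟩ : ∃ n, σ E01 = n := ⟨_, rfl⟩
  have hσ : ∀ u, σ u = e00 u • p + e01 u • n + e11 u • (1 - p) := fun u => by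
    rw [linearMap_apply_eq_entries, hp, hn, hone]
  have hnn : n * n = 0 := by rw [← hn, ← hmul, E01_mul_E01, map_zero]
  have hpn : p * n = 0 := by rw [← hp, ← hn, ← hmul, E01_mul_E00, map_zero]
  have hnp : n * p = n := by rw [← hp, ← hn, ← hmul, E00_mul_E01]
  have hn00 : e00 n = 0 := mul_self_eq_zero.mp (by simpa using congrArg e00 hnn)
  have hn11 : e11 n = 0 := mul_self_eq_zero.mp (by simpa using congrArg e11 hnn)
  have hy : e01 n * e01 n = 1 := by
    have := congrArg e01 (hinv E01)
    rw [hn, hσ n] at this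
    simpa [hn00, hn11, E01] using this
  have hy0 : e01 n ≠ 0 := left_ne_zero_of_mul_eq_one hy
  have hp00 : e00 p = 0 := by
    have := congrArg e01 hpn
    simp only [e01_mul, hn11, e01_zero, mul_zero, add_zero] at this
    exact (mul_eq_zero.mp this).resolve_right hy0
  have hp11 : e11 p = 1 := by
    have := congrArg e01 hnp
    simp only [e01_mul, hn00, zero_mul, zero_add] at this
    exact mul_left_cancel₀ hy0 (this.trans (mul_one _).symm)
  refine ⟨e01 n, e01 p, hy, fun u => ?_⟩
  rw [hσ u]
  apply ext_entries <;> simp [flip, hp00, hp11, hn00, hn11]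
  ring

theorem eq_flip_one_or_eq_starS (h2 : (2 : F) ≠ 0) (hmul : ∀ u v, σ (u * v) = σ v * σ u)
    (hinv : ∀ u, σ (σ u) = u) (hone : σ 1 = 1) :
    (∃ t : F, ∀ u, σ u = flip 1 t u) ∨ ∀ u, σ u = starS F u := by
  obtain ⟨y, t, hy, hσ⟩ := exists_eq_flip hmul hinv hone
  have ht : t * (y - 1) = 0 := by
    have := congrArg e01 (hinv E00)
    simp only [hσ, flip, E00, e00_mk, e01_mk, e11_mk] at this
    linear_combination this
  rcases mul_self_eq_one_iff.mp hy with rfl | rfl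
  · exact Or.inl ⟨t, hσ⟩
  · have ht0 : t = 0 := by
      rw [show (-1 : F) - 1 = -2 by ring] at ht
      exact (mul_eq_zero.mp ht).resolve_right (neg_ne_zero.mpr h2)
    refine Or.inr fun u => ?_
    rw [hσ, starS_eq, flip, ht0]
    apply ext_entries <;> simp

end AntiAutomorphism

theorem not_exists_starUT_equiv_starS (h2 : (2 : F) ≠ 0) :
    ¬∃ φ : ↥(UT2 F) ≃ₐ[F] ↥(UT2 F), ∀ u, φ (starUT F u) = starS F (φ u) := by
  rintro ⟨φ, hφ⟩
  set v := φ E01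
  have hsym : starS F v = v := by rw [← hφ]; rfl
  have hvv : v * v = 0 := by rw [← map_mul, E01_mul_E01, map_zero]
  have h00 : e00 v = 0 := mul_self_eq_zero.mp (by simpa using congrArg e00 hvv)
  have h11 : e11 v = 0 := by simpa [starS_eq, h00] using congrArg e00 hsym
  have h01 : e01 v = 0 := by
    have := congrArg e01 hsym
    simp only [starS_eq, e01_mk] at this
    exact (mul_eq_zero.mp (by linear_combination -this : (2 : F) * e01 v = 0)).resolve_left h2
  have hv : v = 0 := by apply ext_entries <;> simp [h00, h01, h11]
  exact E01_ne_zero (φ.injective (hv.trans (map_zero φ).symm))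

end UT2

open UT2 in
theorem stmt_0 (F : Type*) [Field F] (hchar : ringChar F ≠ 2)
    (σ : ↥(UT2 F) →ₗ[F] ↥(UT2 F))
    (hmul : ∀ u v : ↥(UT2 F), σ (u * v) = σ v * σ u)
    (hinv : ∀ u : ↥(UT2 F), σ (σ u) = u)
    (hcen : ∀ u ∈ Subalgebra.center F ↥(UT2 F), σ u = u) :
    ((∃ φ : ↥(UT2 F) ≃ₐ[F] ↥(UT2 F), ∀ u, φ (σ u) = starUT F (φ u)) ∨
      (∃ φ : ↥(UT2 F) ≃ₐ[F] ↥(UT2 F), ∀ u, φ (σ u) = starS F (φ u))) ∧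
    ¬(∃ φ : ↥(UT2 F) ≃ₐ[F] ↥(UT2 F), ∀ u, φ (starUT F u) = starS F (φ u)) := by
  have h2 : (2 : F) ≠ 0 := Ring.two_ne_zero hchar
  refine ⟨?_, not_exists_starUT_equiv_starS h2⟩
  rcases eq_flip_one_or_eq_starS h2 hmul hinv (hcen 1 (one_mem _)) with ⟨t, hσ⟩ | hσ
  · exact Or.inl ⟨shear (-(t / 2)), fun u => by rw [hσ, shear_flip_one h2]⟩
  · exact Or.inr ⟨AlgEquiv.refl, hσ⟩
end

section
/- Let F be a field with char(F) ≠ 2. Let Y ∈ UT_2(F) be symmetric for ⋆ and let Z_1, …, Z_{m+1} ∈ UT_2(F) be skew-symmetric for ⋆. Then: (i) for every permutation σ of {1, …, m+1}, Z_{σ(1)}⋯Z_{σ(m)}(Z_{σ(m+1)}Y − Y Z_{σ(m+1)}) = Z_1⋯Z_m(Z_{m+1}Y − Y Z_{m+1}); and (ii) for every 0 ≤ i ≤ m, Z_1⋯Z_m(Z_{m+1}Y − Y Z_{m+1}) = (−1)^{m−i} Z_1⋯Z_i(Z_{m+1}Y − Y Z_{m+1})Z_{i+1}⋯Z_m. 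-/
open scoped BigOperators

set_option maxHeartbeats 1000000
set_option synthInstance.maxHeartbeats 400000

/-!
A ⋆-skew element of `UT₂(F)` has diagonal `(a, -a)` and a ⋆-symmetric one has diagonal `(b, b)`,
so `Z Y - Y Z = Z · 2c E₀₁`, where `c = Y₀₁` and `E₀₁` is the corner matrix unit. Multiplying
`t E₀₁` by `u` on the left scales it by `u₀₀`, on the right by `u₁₁`. Hence the left-hand products
equal `(∏ a_j) · 2c E₀₁`, which is symmetric in the `Z_j`, and every skew `Z` anticommutes with
`E₀₁`, which produces the sign `(-1)^(m-i)` when the last `m - i` factors are moved past the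
commutator.
-/

theorem mul_list_prod_of_anticomm {R : Type*} [Ring R] {x : R} {l : List R}
    (h : ∀ z ∈ l, x * z = -(z * x)) : x * l.prod = (-1) ^ l.length * (l.prod * x) := by
  induction l with
  | nil => simp
  | cons z l ih =>
    simp only [List.forall_mem_cons] at h
    rw [List.prod_cons, ← mul_assoc, h.1, List.length_cons, pow_succ, neg_mul, mul_assoc,
      ih h.2]
    rcases neg_one_pow_eq_or R l.length with h1 | h1 <;> simp [h1, mul_assoc]

namespace UT2

variable {F : Type*} [Field F]

def corner (t : F) : UT2 F := ⟨!![0, t; 0, 0], by simp [mem_UT2]⟩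

lemma neg_corner (t : F) : -corner t = corner (-t) := by
  ext i j; fin_cases i <;> fin_cases j <;> simp [corner]

lemma mul_corner (u : UT2 F) (t : F) : u * corner t = corner (u.1 0 0 * t) := by
  have h10 : u.1 1 0 = 0 := u.2
  ext i j; fin_cases i <;> fin_cases j <;> simp [corner, Matrix.mul_apply, h10]

lemma corner_mul (u : UT2 F) (t : F) : corner t * u = corner (u.1 1 1 * t) := by
  have h10 : u.1 1 0 = 0 := u.2
  ext i j; fin_cases i <;> fin_cases j <;> simp [corner, Matrix.mul_apply, h10, mul_comm]

lemma list_prod_mul_corner (l : List (UT2 F)) (t : F) :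
    l.prod * corner t = corner ((l.map fun u => u.1 0 0).prod * t) := by
  induction l with
  | nil => simp
  | cons u l ih =>
    rw [List.prod_cons, mul_assoc, ih, mul_corner, List.map_cons, List.prod_cons, mul_assoc]

lemma entry_one_one_of_star_eq_neg {Z : UT2 F} (hZ : starUT F Z = -Z) :
    Z.1 1 1 = -Z.1 0 0 := by
  simpa [starUT] using congrArg (fun u : UT2 F => u.1 0 0) hZ

lemma entry_one_one_of_star_eq {Y : UT2 F} (hY : starUT F Y = Y) : Y.1 1 1 = Y.1 0 0 := by
  simpa [starUT] using congrArg (fun u : UT2 F => u.1 0 0) hY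

lemma mul_sub_mul_eq_mul_corner {Y Z : UT2 F} (hY : starUT F Y = Y) (hZ : starUT F Z = -Z) :
    Z * Y - Y * Z = Z * corner (2 * Y.1 0 1) := by
  have hy := entry_one_one_of_star_eq hY
  have hz := entry_one_one_of_star_eq_neg hZ
  have hy10 : Y.1 1 0 = 0 := Y.2
  have hz10 : Z.1 1 0 = 0 := Z.2
  rw [mul_corner]
  ext i j; fin_cases i <;> fin_cases j <;> simp [corner, Matrix.mul_apply, hy, hz, hy10, hz10] <;>
    ring

lemma corner_mul_eq_neg {Z : UT2 F} (hZ : starUT F Z = -Z) (t : F) :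
    corner t * Z = -(Z * corner t) := by
  rw [corner_mul, mul_corner, neg_corner, entry_one_one_of_star_eq_neg hZ, neg_mul]

lemma comm_sub_mul_eq_neg {Y Z W : UT2 F} (hY : starUT F Y = Y) (hZ : starUT F Z = -Z)
    (hW : starUT F W = -W) : (Z * Y - Y * Z) * W = -(W * (Z * Y - Y * Z)) := by
  rw [mul_sub_mul_eq_mul_corner hY hZ, mul_corner, corner_mul_eq_neg hW]

end UT2

theorem stmt_2 (F : Type*) [Field F] (m : ℕ)
    (Y : ↥(UT2 F)) (hY : starUT F Y = Y)
    (Z : Fin (m + 1) → ↥(UT2 F)) (hZ : ∀ i, starUT F (Z i) = -(Z i)) :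
    (∀ σ : Equiv.Perm (Fin (m + 1)),
      (List.ofFn fun i : Fin m => Z (σ i.castSucc)).prod *
          (Z (σ (Fin.last m)) * Y - Y * Z (σ (Fin.last m))) =
        (List.ofFn fun i : Fin m => Z i.castSucc).prod *
          (Z (Fin.last m) * Y - Y * Z (Fin.last m))) ∧
    (∀ i : ℕ, (h : i ≤ m) →
      (List.ofFn fun j : Fin m => Z j.castSucc).prod *
          (Z (Fin.last m) * Y - Y * Z (Fin.last m)) =
        (-1 : ↥(UT2 F)) ^ (m - i) *
          ((List.ofFn fun j : Fin i => Z (Fin.castLE (by omega) j)).prod *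
            (Z (Fin.last m) * Y - Y * Z (Fin.last m)) *
            (List.ofFn fun j : Fin (m - i) => Z ⟨i + j.1, by have := j.2; omega⟩).prod)) := by
  have key (σ : Equiv.Perm (Fin (m + 1))) :
      (List.ofFn fun i : Fin m => Z (σ i.castSucc)).prod *
          (Z (σ (Fin.last m)) * Y - Y * Z (σ (Fin.last m))) =
        UT2.corner ((∏ j, (Z j).1 0 0) * (2 * Y.1 0 1)) := by
    rw [UT2.mul_sub_mul_eq_mul_corner hY (hZ _), ← mul_assoc, ← List.prod_concat,
      ← List.ofFn_succ' fun j => Z (σ j), UT2.list_prod_mul_corner, List.map_ofFn, List.prod_ofFn]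
    simp only [Function.comp_def, Equiv.prod_comp σ fun j => (Z j).1 0 0]
  refine ⟨fun σ => (key σ).trans (key 1).symm, fun i hi => ?_⟩
  have hsplit : (List.ofFn fun j : Fin m => Z j.castSucc) =
      (List.ofFn fun j : Fin i => Z (Fin.castLE (by omega) j)) ++
        List.ofFn fun j : Fin (m - i) => Z ⟨i + j.1, by have := j.2; omega⟩ := by
    refine List.ext_getElem (by simp; omega) fun k hk _ => ?_
    simp only [List.getElem_append, List.getElem_ofFn, List.length_ofFn]
    split_ifs
    · rfl
    · congr 1; ext; simp; omega
  rw [hsplit, List.prod_append, mul_assoc _ (Z (Fin.last m) * Y - Y * Z (Fin.last m)),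
    mul_list_prod_of_anticomm (x := Z (Fin.last m) * Y - Y * Z (Fin.last m)), List.length_ofFn]
  · rcases neg_one_pow_eq_or (UT2 F) (m - i) with h | h <;> simp [h, mul_assoc]
  · simp only [List.mem_ofFn, forall_exists_index]
    rintro _ j rfl
    exact UT2.comm_sub_mul_eq_neg hY (hZ _) (hZ _)
end

section
/- Let F be a field with char(F) ≠ 2 and let n ≥ 0. If Z_1, …, Z_{2n} ∈ UT_2(F) are skew-symmetric for ⋆, then the product Z_1 Z_2 ⋯ Z_{2n} lies in the center Z(UT_2(F)). -/
open scoped BigOperators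

set_option maxHeartbeats 1000000
set_option synthInstance.maxHeartbeats 400000

/- A skew-symmetric element of `(UT₂(F), ⋆)` is `diag(a, -a)`, so a product of `m` of them is
`diag(p, (-1)^m p)`; for `m` even this is the scalar `p`. -/

lemma entries_of_starUT_eq_neg (F : Type*) [Field F] (hchar : ringChar F ≠ 2)
    (x : ↥(UT2 F)) (hx : starUT F x = -x) :
    x.1 0 1 = 0 ∧ x.1 1 1 = -x.1 0 0 := by
  have h := congrArg Subtype.val hx
  have h01 : x.1 0 1 = -x.1 0 1 := by simpa [starUT] using congrFun (congrFun h 0) 1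
  have h00 : x.1 1 1 = -x.1 0 0 := by simpa [starUT] using congrFun (congrFun h 0) 0
  have h2x01 : 2 * x.1 0 1 = 0 := by linear_combination h01
  exact ⟨(mul_eq_zero.mp h2x01).resolve_left (Ring.two_ne_zero hchar), h00⟩

lemma list_prod_entries_of_forall_diag_neg (F : Type*) [Field F] (L : List ↥(UT2 F))
    (hL : ∀ x ∈ L, x.1 0 1 = 0 ∧ x.1 1 1 = -x.1 0 0) :
    L.prod.1 0 1 = 0 ∧ L.prod.1 1 1 = (-1) ^ L.length * L.prod.1 0 0 := by
  induction L with
  | nil => simp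
  | cons x L ih =>
    obtain ⟨hx01, hx11⟩ := hL x List.mem_cons_self
    obtain ⟨hp01, hp11⟩ := ih fun y hy => hL y (List.mem_cons_of_mem x hy)
    have hx10 : x.1 1 0 = 0 := x.2
    have hp10 : L.prod.1 1 0 = 0 := L.prod.2
    simp only [List.prod_cons, Subalgebra.coe_mul, Matrix.mul_apply, Fin.sum_univ_two,
      List.length_cons, hx01, hx10, hx11, hp01, hp10, hp11]
    constructor <;> ring

lemma eq_algebraMap_of_entries (F : Type*) [Field F] (M : ↥(UT2 F))
    (h01 : M.1 0 1 = 0) (h11 : M.1 1 1 = M.1 0 0) :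
    M = algebraMap F ↥(UT2 F) (M.1 0 0) := by
  have h10 : M.1 1 0 = 0 := M.2
  ext i j
  fin_cases i <;> fin_cases j <;> simp [Matrix.algebraMap_matrix_apply, h01, h10, h11]

theorem stmt_3 (F : Type*) [Field F] (hchar : ringChar F ≠ 2) (n : ℕ)
    (Z : Fin (2 * n) → ↥(UT2 F)) (hZ : ∀ i, starUT F (Z i) = -(Z i)) :
    (List.ofFn Z).prod ∈ Subalgebra.center F ↥(UT2 F) := by
  obtain ⟨h01, h11⟩ := list_prod_entries_of_forall_diag_neg F (List.ofFn Z) fun x hx => by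
    obtain ⟨i, rfl⟩ := List.mem_ofFn.mp hx
    exact entries_of_starUT_eq_neg F hchar (Z i) (hZ i)
  rw [List.length_ofFn, pow_mul, neg_one_sq, one_pow, one_mul] at h11
  rw [eq_algebraMap_of_entries F _ h01 h11]
  exact Subalgebra.algebraMap_mem _ _
end

section
/- Let F be a field with char(F) ≠ 2, and let f ∈ F⟨Y∪Z⟩ be homogeneous in the variable z_m of degree d ≥ 0 (every monomial of f contains exactly d occurrences of z_m). If the polynomial g = f·z_m belongs to C(UT_2(F), ⋆), then g ∈ Id(UT_2(F), ⋆) + ⟨z_1z_2⟩^{TS(*)}. -/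
open scoped BigOperators

set_option maxHeartbeats 1000000
set_option synthInstance.maxHeartbeats 400000

/-!
Split `f = s + k` into its symmetric and skew parts; `k * z_m` is a product of two skew
polynomials. In characteristic `≠ 2` the skew elements of `(UT₂(F), ⋆)` are the matrices
`diag(a, -a)`, so a product of two of them is scalar and `s * z_m` is again `⋆`-central.
A symmetric `(a c; 0 a)` times `diag(b, -b)` is `(ab, -cb; 0, -ab)`, which is central only
when it vanishes, so `s * z_m` is a `⋆`-identity.
-/

namespace UT2

variable {F : Type*} [Field F]

@[simp]
lemma coe_lower (M : ↥(UT2 F)) : M.1 1 0 = 0 := M.2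

lemma ext_entries_s5 {M N : ↥(UT2 F)} (h00 : M.1 0 0 = N.1 0 0) (h01 : M.1 0 1 = N.1 0 1)
    (h11 : M.1 1 1 = N.1 1 1) : M = N := by
  ext i j
  fin_cases i <;> fin_cases j <;> simp [h00, h01, h11]

@[simp]
lemma mul_apply (M N : ↥(UT2 F)) (i j : Fin 2) :
    (M * N).1 i j = M.1 i 0 * N.1 0 j + M.1 i 1 * N.1 1 j :=
  Matrix.mul_apply.trans (Fin.sum_univ_two _)

@[simp]
lemma algebraMap_apply (r : F) (i j : Fin 2) :
    (algebraMap F ↥(UT2 F) r).1 i j = if i = j then r else 0 :=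
  Matrix.algebraMap_matrix_apply

lemma mem_center_iff {M : ↥(UT2 F)} :
    M ∈ Subalgebra.center F ↥(UT2 F) ↔ M.1 0 1 = 0 ∧ M.1 0 0 = M.1 1 1 := by
  constructor
  · intro hM
    have corner (E : Matrix (Fin 2) (Fin 2) F) (hE : E 1 0 = 0) :=
      congrArg (fun N : ↥(UT2 F) => N.1 0 1) (Subalgebra.mem_center_iff.1 hM ⟨E, hE⟩)
    have hE11 := corner !![1, 0; 0, 0] rfl
    have hE12 := corner !![0, 1; 0, 0] rfl
    exact ⟨by simpa using hE11, by simpa using hE12.symm⟩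
  · rintro ⟨h01, hdiag⟩
    have hM : M = algebraMap F ↥(UT2 F) (M.1 0 0) :=
      ext_entries_s5 (by simp) (by simp [h01]) (by simp [hdiag])
    rw [hM]
    exact Subalgebra.algebraMap_mem _ _

end UT2

section starUT

variable {F : Type*} [Field F]

@[simp] lemma starUT_apply_00 (M : ↥(UT2 F)) : (starUT F M).1 0 0 = M.1 1 1 := rfl
@[simp] lemma starUT_apply_01 (M : ↥(UT2 F)) : (starUT F M).1 0 1 = M.1 0 1 := rfl
@[simp] lemma starUT_apply_11 (M : ↥(UT2 F)) : (starUT F M).1 1 1 = M.1 0 0 := rfl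

lemma starUT_add (M N : ↥(UT2 F)) : starUT F (M + N) = starUT F M + starUT F N :=
  UT2.ext_entries_s5 (by simp) (by simp) (by simp)

lemma starUT_mul (M N : ↥(UT2 F)) : starUT F (M * N) = starUT F N * starUT F M :=
  UT2.ext_entries_s5 (by simp; ring) (by simp; ring) (by simp; ring)

lemma starUT_algebraMap (r : F) :
    starUT F (algebraMap F ↥(UT2 F) r) = algebraMap F ↥(UT2 F) r :=
  UT2.ext_entries_s5 (by simp) (by simp) (by simp)

end starUT

section skewSym

variable {F : Type*} [Field F]

lemma entries_of_starUT_eq_neg_s5 (hchar : ringChar F ≠ 2) {K : ↥(UT2 F)} (hK : starUT F K = -K) :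
    K.1 0 1 = 0 ∧ K.1 1 1 = -K.1 0 0 := by
  have h01 := congrArg (fun N : ↥(UT2 F) => N.1 0 1) hK
  have h00 := congrArg (fun N : ↥(UT2 F) => N.1 0 0) hK
  simp only [starUT_apply_01, starUT_apply_00, NegMemClass.coe_neg, Matrix.neg_apply] at h01 h00
  exact ⟨(Ring.eq_self_iff_eq_zero_of_char_ne_two hchar).1 h01.symm, h00⟩

lemma entries_of_starUT_eq_self {S : ↥(UT2 F)} (hS : starUT F S = S) : S.1 1 1 = S.1 0 0 :=
  congrArg (fun N : ↥(UT2 F) => N.1 0 0) hS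

lemma skew_mul_skew_mem_center (hchar : ringChar F ≠ 2) {K L : ↥(UT2 F)}
    (hK : starUT F K = -K) (hL : starUT F L = -L) : K * L ∈ Subalgebra.center F ↥(UT2 F) := by
  obtain ⟨hK01, hK11⟩ := entries_of_starUT_eq_neg_s5 hchar hK
  obtain ⟨hL01, hL11⟩ := entries_of_starUT_eq_neg_s5 hchar hL
  rw [UT2.mem_center_iff]
  constructor <;> simp [hK01, hK11, hL01, hL11]

lemma sym_mul_skew_eq_zero_of_mem_center (hchar : ringChar F ≠ 2) {S K : ↥(UT2 F)}
    (hS : starUT F S = S) (hK : starUT F K = -K) (hSK : S * K ∈ Subalgebra.center F ↥(UT2 F)) :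
    S * K = 0 := by
  obtain ⟨hK01, hK11⟩ := entries_of_starUT_eq_neg_s5 hchar hK
  have hS11 := entries_of_starUT_eq_self hS
  obtain ⟨h01, hdiag⟩ := UT2.mem_center_iff.1 hSK
  simp only [UT2.mul_apply, UT2.coe_lower, hK01, hK11, hS11] at h01 hdiag
  have h00 : S.1 0 0 * K.1 0 0 = 0 :=
    (Ring.eq_self_iff_eq_zero_of_char_ne_two hchar).1 (by linear_combination -hdiag)
  exact UT2.ext_entries_s5 (by simp [h00]) (by simpa [hK01, hK11] using h01)
    (by simp [hK11, hS11, h00])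

end skewSym

section fStar

variable {F : Type*} [Field F]

@[simp] lemma fStar_add (a b : FA F) : fStar F (a + b) = fStar F a + fStar F b := by
  simp [fStar]

@[simp] lemma fStar_neg (a : FA F) : fStar F (-a) = -fStar F a := by
  simp [fStar]

@[simp] lemma fStar_smul (c : F) (a : FA F) : fStar F (c • a) = c • fStar F a := by
  simp [fStar]

@[simp] lemma fStar_mul (a b : FA F) : fStar F (a * b) = fStar F b * fStar F a := by
  simp [fStar]

@[simp] lemma fStar_algebraMap (r : F) :
    fStar F (algebraMap F (FA F) r) = algebraMap F (FA F) r := by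
  simp [fStar, MulOpposite.algebraMap_apply]

@[simp] lemma fStar_ι_inl (i : ℕ) :
    fStar F (FreeAlgebra.ι F (Sum.inl i)) = FreeAlgebra.ι F (Sum.inl i) := by
  simp [fStar, fStarAux]

@[simp] lemma fStar_ι_inr (i : ℕ) :
    fStar F (FreeAlgebra.ι F (Sum.inr i)) = -FreeAlgebra.ι F (Sum.inr i) := by
  simp [fStar, fStarAux]

@[simp] lemma fStar_fStar (a : FA F) : fStar F (fStar F a) = a := by
  induction a using FreeAlgebra.induction with
  | grade0 r => simp
  | grade1 x => cases x <;> simp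
  | mul a b ha hb => simp [ha, hb]
  | add a b ha hb => simp [ha, hb]

lemma isSkew_zv (i : ℕ) : IsSkew F (zv F i) := fStar_ι_inr i

lemma exists_isSym_add_isSkew (hchar : ringChar F ≠ 2) (f : FA F) :
    ∃ s k, IsSym F s ∧ IsSkew F k ∧ f = s + k := by
  have h2 : (2 : F) ≠ 0 := Ring.two_ne_zero hchar
  refine ⟨(2⁻¹ : F) • (f + fStar F f), (2⁻¹ : F) • (f - fStar F f), ?_, ?_, ?_⟩
  · simp [IsSym, add_comm]
  · simp [IsSkew, sub_eq_add_neg, smul_add]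
  · rw [← smul_add, add_add_sub_cancel, ← two_smul F, smul_smul, inv_mul_cancel₀ h2,
      one_smul]

lemma IsSubstWith.map_fStar {φ : FA F →ₐ[F] ↥(UT2 F)} (hφ : IsSubstWith F (starUT F) φ)
    (a : FA F) : φ (fStar F a) = starUT F (φ a) := by
  induction a using FreeAlgebra.induction with
  | grade0 r => simp [starUT_algebraMap]
  | grade1 x =>
    cases x with
    | inl i => rw [fStar_ι_inl]; exact (hφ.1 i).symm
    | inr i => rw [fStar_ι_inr, map_neg]; exact (hφ.2 i).symm
  | mul a b ha hb => rw [fStar_mul, map_mul, map_mul, ha, hb, starUT_mul]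
  | add a b ha hb => rw [fStar_add, map_add, map_add, ha, hb, starUT_add]

lemma IsSubstWith.starUT_map_of_isSym {φ : FA F →ₐ[F] ↥(UT2 F)}
    (hφ : IsSubstWith F (starUT F) φ) {s : FA F} (hs : IsSym F s) : starUT F (φ s) = φ s := by
  rw [← hφ.map_fStar, hs]

lemma IsSubstWith.starUT_map_of_isSkew {φ : FA F →ₐ[F] ↥(UT2 F)}
    (hφ : IsSubstWith F (starUT F) φ) {k : FA F} (hk : IsSkew F k) : starUT F (φ k) = -φ k := by
  rw [← hφ.map_fStar, hk, map_neg]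

end fStar

theorem stmt_5_general (F : Type*) [Field F] (hchar : ringChar F ≠ 2)
    (m : ℕ) (f : FA F)
    (hc : f * zv F m ∈ CWith F (starUT F)) :
    f * zv F m ∈ IdWith F (starUT F) ⊔ TSz F := by
  obtain ⟨s, k, hs, hk, rfl⟩ := exists_isSym_add_isSkew hchar f
  rw [add_mul]
  refine add_mem (Submodule.mem_sup_left ?_)
    (Submodule.mem_sup_right (Submodule.subset_span ⟨k, zv F m, hk, isSkew_zv m, rfl⟩))
  intro φ hφ
  have hz := hφ.starUT_map_of_isSkew (isSkew_zv m)
  have hkz : φ (k * zv F m) ∈ Subalgebra.center F ↥(UT2 F) := by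
    rw [map_mul]
    exact skew_mul_skew_mem_center hchar (hφ.starUT_map_of_isSkew hk) hz
  have hsz : φ (s * zv F m) ∈ Subalgebra.center F ↥(UT2 F) := by
    simpa [add_mul] using sub_mem (hc φ hφ) hkz
  rw [map_mul] at hsz ⊢
  exact sym_mul_skew_eq_zero_of_mem_center hchar (hφ.starUT_map_of_isSym hs) hz hsz

theorem stmt_5 (F : Type*) [Field F] (hchar : ringChar F ≠ 2)
    (m d : ℕ) (f : FA F)
    (hhom : ∀ w ∈ (FreeAlgebra.equivMonoidAlgebraFreeMonoid (R := F) (X := ℕ ⊕ ℕ) f).coeff.support,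
      (FreeMonoid.toList w).count (Sum.inr m) = d)
    (hc : f * zv F m ∈ CWith F (starUT F)) :
    f * zv F m ∈ IdWith F (starUT F) ⊔ TSz F :=
  stmt_5_general F hchar m f hc
end

section
/- Let F be an infinite field with char(F) ≠ 2. Then Id(UT_2(F), ⋆) equals the two-sided ideal of F⟨Y∪Z⟩ generated by all elements f(g_1, …, g_n, h_1, …, h_m) where f is one of the polynomials [y_1, y_2], [z_1, z_2], [y_1, z_1][y_2, z_2], z_1 y_1 z_2 − z_2 y_1 z_1, the g_i range over symmetric polynomials and the h_j range over skew polynomials of F⟨Y∪Z⟩. -/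
open scoped BigOperators

set_option maxHeartbeats 1000000
set_option synthInstance.maxHeartbeats 400000

/-!
The polynomials of the generating set vanish on `(UT₂, ⋆)` because symmetric elements have the
form `(a c; 0 a)`, skew ones (in characteristic `≠ 2`) the form `(b 0; 0 -b)`, and commutators in
`UT₂` are strictly upper triangular. Conversely, modulo the ideal `J` they generate, the images of
`y_i` commute with each other and with `[y_i, z_j]`, the images of `z_i` commute with each other
and anticommute with `[y_i, z_j]`, products of two commutators vanish, and
`z_l [y_i, z_j] ≡ z_j [y_i, z_l]`. Hence every polynomial is congruent modulo `J` to a combination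
of the normal words `y_l z_m` and `y_l z_m [y_a, z_b]` (`l` sorted, `m ++ [b]` sorted). Under the
generic substitution `y_i ↦ (a_i c_i; 0 a_i)`, `z_i ↦ (b_i 0; 0 -b_i)` into matrices over
`F[a, b, c]` these normal words go to matrices whose `(0,0)` resp. `(0,1)` entries are distinct
monomials, so their images are linearly independent. As `F` is infinite, the generic
substitution kills every identity, hence also the combination of normal words an identity is
congruent to; that combination is therefore `0`.
-/

section General

variable {F A : Type*} [Field F] [Ring A] [Algebra F A]

lemma mul_left_mem_span_range {ι : Type*} {v : ι → A} {x a : A}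
    (hx : ∀ i, x * v i ∈ Submodule.span F (Set.range v))
    (ha : a ∈ Submodule.span F (Set.range v)) : x * a ∈ Submodule.span F (Set.range v) :=
  (Submodule.span_le (p := (Submodule.span F (Set.range v)).comap (LinearMap.mulLeft F x))).2
    (Set.range_subset_iff.2 hx) ha

lemma mul_right_mem_span_range {ι : Type*} {v : ι → A} {x a : A}
    (hx : ∀ i, v i * x ∈ Submodule.span F (Set.range v))
    (ha : a ∈ Submodule.span F (Set.range v)) : a * x ∈ Submodule.span F (Set.range v) :=
  (Submodule.span_le (p := (Submodule.span F (Set.range v)).comap (LinearMap.mulRight F x))).2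
    (Set.range_subset_iff.2 hx) ha

lemma TwoSidedIdeal.mkₐ_eq_zero_iff (I : TwoSidedIdeal A) {x : A} :
    I.ringCon.mkₐ F x = 0 ↔ x ∈ I :=
  (RingCon.eq _).trans (I.mem_iff x).symm

end General

lemma Multiset.count_map_prodMk {α β : Type*} [DecidableEq α] [DecidableEq β] (a b : α) (x : β)
    (s : Multiset β) : (s.map (b, ·)).count (a, x) = if a = b then s.count x else 0 := by
  split_ifs with h
  · subst h
    exact Multiset.count_map_eq_count' _ _ (Prod.mk_right_injective a) _
  · exact Multiset.count_eq_zero.2 (by simp [Ne.symm h])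

lemma MvPolynomial.prod_map_X_eq_monomial {σ R : Type*} [CommSemiring R] [DecidableEq σ]
    (s : Multiset σ) : (s.map (X : σ → MvPolynomial σ R)).prod = monomial s.toFinsupp 1 := by
  induction s using Multiset.induction_on with
  | empty => simp
  | cons a s ih =>
    rw [Multiset.map_cons, Multiset.prod_cons, ih, ← Multiset.singleton_add,
      Multiset.toFinsupp_add, Multiset.toFinsupp_singleton, X, monomial_mul, one_mul]

lemma MvPolynomial.linearIndependent_prod_map_X (σ R : Type*) [CommSemiring R] :
    LinearIndependent R fun s : Multiset σ => (s.map (X : σ → MvPolynomial σ R)).prod := by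
  classical
  convert (basisMonomials σ R).linearIndependent.comp _ Multiset.toFinsupp.injective using 1
  funext s
  simp [prod_map_X_eq_monomial]

lemma LinearIndependent.sum_elim_of_map_eq_zero {R M N ι κ : Type*} [Ring R] [AddCommGroup M]
    [Module R M] [AddCommGroup N] [Module R N] {v : ι → M} {w : κ → M} (f : M →ₗ[R] N)
    (hv : LinearIndependent R (f ∘ v)) (hw : LinearIndependent R w) (hfw : ∀ k, f (w k) = 0) :
    LinearIndependent R (Sum.elim v w) :=
  (hv.of_comp f).sum_type hw <| (Submodule.range_ker_disjoint hv).mono_right <|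
    Submodule.span_le.2 (Set.range_subset_iff.2 hfw)

section StarOnFreeAlgebra

variable {F : Type*} [Field F]

@[simp] lemma fStar_sub (a b : FA F) : fStar F (a - b) = fStar F a - fStar F b := by
  simp [fStar]

@[simp] lemma fStar_yv (i : ℕ) : fStar F (yv F i) = yv F i := by
  simp [fStar, fStarAux, yv]

@[simp] lemma fStar_zv (i : ℕ) : fStar F (zv F i) = -zv F i := by
  simp [fStar, fStarAux, zv]

lemma isSym_yv (i : ℕ) : IsSym F (yv F i) := fStar_yv i

lemma isSym_lie_yv_zv (i j : ℕ) : IsSym F ⁅yv F i, zv F j⁆ := by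
  simp [IsSym, Ring.lie_def, neg_add_eq_sub]

lemma isSym_zv_mul_zv_add (i j : ℕ) : IsSym F (zv F i * zv F j + zv F j * zv F i) := by
  simp [IsSym, add_comm]

end StarOnFreeAlgebra

namespace UT2

variable {F : Type*} [Field F]

lemma val_one_zero (M : UT2 F) : M.1 1 0 = 0 := M.2

lemma ext_of_entries {M N : UT2 F} (h₀₀ : M.1 0 0 = N.1 0 0) (h₀₁ : M.1 0 1 = N.1 0 1)
    (h₁₁ : M.1 1 1 = N.1 1 1) : M = N := by
  apply Subtype.ext
  ext i j
  fin_cases i <;> fin_cases j <;> simp [h₀₀, h₀₁, h₁₁, val_one_zero]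

@[simp] lemma mul_val_zero_zero (M N : UT2 F) : (M * N).1 0 0 = M.1 0 0 * N.1 0 0 := by
  simp [Matrix.mul_apply, Fin.sum_univ_two, val_one_zero]

@[simp] lemma mul_val_zero_one (M N : UT2 F) :
    (M * N).1 0 1 = M.1 0 0 * N.1 0 1 + M.1 0 1 * N.1 1 1 := by
  simp [Matrix.mul_apply, Fin.sum_univ_two]

@[simp] lemma mul_val_one_one (M N : UT2 F) : (M * N).1 1 1 = M.1 1 1 * N.1 1 1 := by
  simp [Matrix.mul_apply, Fin.sum_univ_two, val_one_zero]

@[simp] lemma zero_val (i j : Fin 2) : (0 : UT2 F).1 i j = 0 := rfl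

@[simp] lemma sub_val (M N : UT2 F) (i j : Fin 2) : (M - N).1 i j = M.1 i j - N.1 i j := rfl

lemma starUT_mul (M N : UT2 F) : starUT F (M * N) = starUT F N * starUT F M :=
  ext_of_entries (by simp [starUT, mul_comm]) (by simp [starUT]; ring) (by simp [starUT, mul_comm])

lemma starUT_add (M N : UT2 F) : starUT F (M + N) = starUT F M + starUT F N :=
  ext_of_entries (by simp [starUT]) (by simp [starUT]) (by simp [starUT])

lemma starUT_algebraMap (r : F) :
    starUT F (algebraMap F (UT2 F) r) = algebraMap F (UT2 F) r :=
  ext_of_entries (by simp [starUT, Matrix.algebraMap_matrix_apply])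
    (by simp [starUT, Matrix.algebraMap_matrix_apply])
    (by simp [starUT, Matrix.algebraMap_matrix_apply])

lemma val_one_one_of_starUT_eq_self {M : UT2 F} (h : starUT F M = M) : M.1 1 1 = M.1 0 0 := by
  simpa [starUT] using congrArg (fun N : UT2 F => N.1 0 0) h

lemma val_one_one_of_starUT_eq_neg {M : UT2 F} (h : starUT F M = -M) : M.1 1 1 = -M.1 0 0 := by
  simpa [starUT] using congrArg (fun N : UT2 F => N.1 0 0) h

lemma val_zero_one_of_starUT_eq_neg (h2 : (2 : F) ≠ 0) {M : UT2 F} (h : starUT F M = -M) :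
    M.1 0 1 = 0 := by
  have h01 : M.1 0 1 = -M.1 0 1 := by
    simpa [starUT] using congrArg (fun N : UT2 F => N.1 0 1) h
  have : (2 : F) * M.1 0 1 = 0 := by linear_combination h01
  exact (mul_eq_zero.1 this).resolve_left h2

lemma commute_of_starUT_eq_self {M N : UT2 F} (hM : starUT F M = M) (hN : starUT F N = N) :
    Commute M N :=
  ext_of_entries (by simp [mul_comm])
    (by simp only [mul_val_zero_one, val_one_one_of_starUT_eq_self hM,
      val_one_one_of_starUT_eq_self hN]; ring)
    (by simp [mul_comm])

lemma commute_of_starUT_eq_neg (h2 : (2 : F) ≠ 0) {M N : UT2 F} (hM : starUT F M = -M)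
    (hN : starUT F N = -N) : Commute M N :=
  ext_of_entries (by simp [mul_comm])
    (by simp [val_zero_one_of_starUT_eq_neg h2 hM, val_zero_one_of_starUT_eq_neg h2 hN])
    (by simp [mul_comm])

/-- The diagonal of `UT₂` is commutative, so commutators are strictly upper triangular. -/
lemma commutator_mul_commutator (M N P Q : UT2 F) : (M * N - N * M) * (P * Q - Q * P) = 0 :=
  ext_of_entries (by simp only [mul_val_zero_zero, sub_val, zero_val]; ring)
    (by simp only [mul_val_zero_zero, mul_val_zero_one, mul_val_one_one, sub_val, zero_val]; ring)
    (by simp only [mul_val_one_one, sub_val, zero_val]; ring)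

lemma skew_mul_sym_mul_skew (h2 : (2 : F) ≠ 0) {M N P : UT2 F} (hM : starUT F M = -M)
    (hN : starUT F N = N) (hP : starUT F P = -P) : M * N * P = P * N * M :=
  ext_of_entries (by simp only [mul_val_zero_zero]; ring)
    (by simp only [mul_val_zero_one, mul_val_zero_zero, val_zero_one_of_starUT_eq_neg h2 hM,
      val_zero_one_of_starUT_eq_neg h2 hP, val_one_one_of_starUT_eq_neg hM,
      val_one_one_of_starUT_eq_self hN, val_one_one_of_starUT_eq_neg hP]; ring)
    (by simp only [mul_val_one_one]; ring)

end UT2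

namespace IsSubstWith

variable {F : Type*} [Field F] {φ : FA F →ₐ[F] UT2 F}

lemma map_fStar_s7 (hφ : IsSubstWith F (starUT F) φ) (f : FA F) :
    φ (fStar F f) = starUT F (φ f) := by
  induction f using FreeAlgebra.induction with
  | grade0 r => rw [fStar_algebraMap, AlgHom.commutes, UT2.starUT_algebraMap]
  | grade1 x =>
    rcases x with i | i
    · change φ (fStar F (yv F i)) = starUT F (φ (yv F i))
      rw [fStar_yv, hφ.1 i]
    · change φ (fStar F (zv F i)) = starUT F (φ (zv F i))
      rw [fStar_zv, map_neg, hφ.2 i]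
  | mul a b ha hb => rw [fStar_mul, map_mul, ha, hb, map_mul, UT2.starUT_mul]
  | add a b ha hb => rw [fStar_add, map_add, ha, hb, map_add, UT2.starUT_add]

lemma starUT_map_of_isSym_s7 (hφ : IsSubstWith F (starUT F) φ) {g : FA F} (hg : IsSym F g) :
    starUT F (φ g) = φ g := by
  rw [← hφ.map_fStar_s7, hg]

lemma starUT_map_of_isSkew_s7 (hφ : IsSubstWith F (starUT F) φ) {h : FA F} (hh : IsSkew F h) :
    starUT F (φ h) = -φ h := by
  rw [← hφ.map_fStar_s7, hh, map_neg]

end IsSubstWith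

section Generators

variable {F : Type*} [Field F]

variable (F) in
def starGenerators : Set (FA F) := {a : FA F |
  (∃ g₁ g₂, IsSym F g₁ ∧ IsSym F g₂ ∧ a = g₁ * g₂ - g₂ * g₁) ∨
  (∃ h₁ h₂, IsSkew F h₁ ∧ IsSkew F h₂ ∧ a = h₁ * h₂ - h₂ * h₁) ∨
  (∃ g₁ g₂ h₁ h₂, IsSym F g₁ ∧ IsSym F g₂ ∧ IsSkew F h₁ ∧ IsSkew F h₂ ∧
    a = (g₁ * h₁ - h₁ * g₁) * (g₂ * h₂ - h₂ * g₂)) ∨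
  (∃ g₁ h₁ h₂, IsSym F g₁ ∧ IsSkew F h₁ ∧ IsSkew F h₂ ∧
    a = h₁ * g₁ * h₂ - h₂ * g₁ * h₁)}

lemma IsSubstWith.map_eq_zero_of_mem_starGenerators (h2 : (2 : F) ≠ 0) {φ : FA F →ₐ[F] UT2 F}
    (hφ : IsSubstWith F (starUT F) φ) {a : FA F} (ha : a ∈ starGenerators F) : φ a = 0 := by
  rcases ha with ⟨g₁, g₂, hg₁, hg₂, rfl⟩ | ⟨h₁, h₂, hh₁, hh₂, rfl⟩ |
    ⟨g₁, g₂, h₁, h₂, -, -, -, -, rfl⟩ | ⟨g₁, h₁, h₂, hg₁, hh₁, hh₂, rfl⟩ <;>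
    simp only [map_sub, map_mul]
  · exact sub_eq_zero.2 (UT2.commute_of_starUT_eq_self (hφ.starUT_map_of_isSym_s7 hg₁)
      (hφ.starUT_map_of_isSym_s7 hg₂)).eq
  · exact sub_eq_zero.2 (UT2.commute_of_starUT_eq_neg h2 (hφ.starUT_map_of_isSkew_s7 hh₁)
      (hφ.starUT_map_of_isSkew_s7 hh₂)).eq
  · exact UT2.commutator_mul_commutator _ _ _ _
  · exact sub_eq_zero.2 (UT2.skew_mul_sym_mul_skew h2 (hφ.starUT_map_of_isSkew_s7 hh₁)
      (hφ.starUT_map_of_isSym_s7 hg₁) (hφ.starUT_map_of_isSkew_s7 hh₂))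

lemma mem_IdWith_of_mem_span_starGenerators (h2 : (2 : F) ≠ 0) {f : FA F}
    (hf : f ∈ TwoSidedIdeal.span (starGenerators F)) : f ∈ IdWith F (starUT F) := fun φ hφ =>
  (TwoSidedIdeal.mem_ker φ).1 <| TwoSidedIdeal.span_le.2
    (fun _ ha => (TwoSidedIdeal.mem_ker φ).2 (hφ.map_eq_zero_of_mem_starGenerators h2 ha)) hf

end Generators

@[ext] structure PlainIndex where
  l : List ℕ
  m : List ℕ
  sorted_l : l.Pairwise (· ≤ ·)
  sorted_m : m.Pairwise (· ≤ ·)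

@[ext] structure BracketIndex where
  l : List ℕ
  m : List ℕ
  a : ℕ
  b : ℕ
  sorted_l : l.Pairwise (· ≤ ·)
  sorted_mb : (m ++ [b]).Pairwise (· ≤ ·)

section NormalForm

variable {A : Type*} [Ring A] {F : Type*} [Field F] [Algebra F A]

structure UTStarRelations (y z : ℕ → A) : Prop where
  commute_y : ∀ i j, Commute (y i) (y j)
  commute_z : ∀ i j, Commute (z i) (z j)
  commute_y_lie : ∀ k i j, Commute (y k) ⁅y i, z j⁆
  commute_y_anticomm : ∀ k i j, Commute (y k) (z i * z j + z j * z i)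
  lie_mul_lie : ∀ i j k l, ⁅y i, z j⁆ * ⁅y k, z l⁆ = 0
  z_mul_y_mul_z : ∀ k i j, z k * y i * z j = z j * y i * z k

def normalWord (y z : ℕ → A) : PlainIndex ⊕ BracketIndex → A
  | .inl t => (t.l.map y).prod * (t.m.map z).prod
  | .inr t => (t.l.map y).prod * (t.m.map z).prod * ⁅y t.a, z t.b⁆

lemma AlgHom.map_normalWord {B : Type*} [Ring B] [Algebra F B] (π : A →ₐ[F] B) (y z : ℕ → A)
    (t : PlainIndex ⊕ BracketIndex) : π (normalWord y z t) = normalWord (π ∘ y) (π ∘ z) t := by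
  rcases t with t | t <;> simp [normalWord, map_list_prod, Ring.lie_def]

variable (F) in
def normalSpan (y z : ℕ → A) : Submodule F A := Submodule.span F (Set.range (normalWord y z))

namespace UTStarRelations

variable {y z : ℕ → A}

lemma prod_map_y_eq_of_perm (h : UTStarRelations y z) {l l' : List ℕ} (hl : l.Perm l') :
    (l.map y).prod = (l'.map y).prod :=
  (hl.map y).prod_eq' (List.pairwise_map.2 (List.pairwise_of_forall fun i j => h.commute_y i j))

lemma prod_map_z_eq_of_perm (h : UTStarRelations y z) {m m' : List ℕ} (hm : m.Perm m') :
    (m.map z).prod = (m'.map z).prod :=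
  (hm.map z).prod_eq' (List.pairwise_map.2 (List.pairwise_of_forall fun i j => h.commute_z i j))

/-- Since the `z_i` commute, `z_i z_j + z_j z_i = 2 z_i z_j`. -/
lemma commute_y_z_mul_z (h : UTStarRelations y z) (h2 : (2 : F) ≠ 0) (k i j : ℕ) :
    Commute (y k) (z i * z j) := by
  have hsum : z i * z j + z j * z i = (2 : F) • (z i * z j) := by
    rw [(h.commute_z j i).eq, two_smul]
  have := (h.commute_y_anticomm k i j).smul_right (2 : F)⁻¹
  rwa [hsum, smul_smul, inv_mul_cancel₀ h2, one_smul] at this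

lemma lie_mul_z (h : UTStarRelations y z) (h2 : (2 : F) ≠ 0) (k i j : ℕ) :
    ⁅y i, z j⁆ * z k = -(z k * ⁅y i, z j⁆) := by
  rw [eq_neg_iff_add_eq_zero]
  have key : ⁅y i, z j⁆ * z k + z k * ⁅y i, z j⁆ =
      (z k * y i * z j - z j * y i * z k) + (y i * (z j * z k) - z j * z k * y i)
        + (z j * z k - z k * z j) * y i := by
    rw [Ring.lie_def]
    noncomm_ring
  rw [key, h.z_mul_y_mul_z, (h.commute_y_z_mul_z h2 i j k).eq, (h.commute_z j k).eq]
  simp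

lemma z_mul_lie_comm (h : UTStarRelations y z) (i j l : ℕ) :
    z l * ⁅y i, z j⁆ = z j * ⁅y i, z l⁆ := by
  have key : z l * ⁅y i, z j⁆ - z j * ⁅y i, z l⁆ =
      (z l * y i * z j - z j * y i * z l) - (z l * z j - z j * z l) * y i := by
    simp only [Ring.lie_def]
    noncomm_ring
  rw [← sub_eq_zero, key, h.z_mul_y_mul_z, (h.commute_z l j).eq]
  simp

lemma prod_map_z_mul_lie_eq_of_perm (h : UTStarRelations y z) {a b b' : ℕ} {m m' : List ℕ}
    (hp : (b :: m).Perm (b' :: m')) :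
    (m.map z).prod * ⁅y a, z b⁆ = (m'.map z).prod * ⁅y a, z b'⁆ := by
  by_cases hb : b = b'
  · subst hb
    rw [h.prod_map_z_eq_of_perm hp.cons_inv]
  · have hb' : b' ∈ m :=
      (List.mem_cons.1 (hp.symm.subset List.mem_cons_self)).resolve_left (Ne.symm hb)
    have hm : m.Perm (b' :: m.erase b') := List.perm_cons_erase hb'
    have hm' : (b :: m.erase b').Perm m' :=
      (List.Perm.cons_inv (hp.symm.trans ((hm.cons b).trans (List.Perm.swap _ _ _)))).symm
    rw [h.prod_map_z_eq_of_perm (hm.trans (List.perm_append_singleton _ _).symm),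
      ← h.prod_map_z_eq_of_perm ((List.perm_append_singleton _ _).trans hm')]
    simp only [List.map_append, List.prod_append, List.map_cons, List.map_nil, List.prod_cons,
      List.prod_nil, mul_one, mul_assoc, h.z_mul_lie_comm a b b']

lemma lie_mul_prod_map_z (h : UTStarRelations y z) (h2 : (2 : F) ≠ 0) (a b : ℕ) (m : List ℕ) :
    ⁅y a, z b⁆ * (m.map z).prod = ((-1 : F) ^ m.length) • ((m.map z).prod * ⁅y a, z b⁆) := by
  induction m with
  | nil => simp
  | cons k m ih =>
    rw [List.map_cons, List.prod_cons, ← mul_assoc, h.lie_mul_z h2, neg_mul, mul_assoc, ih,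
      mul_smul_comm, ← mul_assoc, List.length_cons, pow_succ, mul_neg_one, neg_smul, ← smul_neg]

lemma word_mem_normalSpan (h : UTStarRelations y z) (l m : List ℕ) :
    (l.map y).prod * (m.map z).prod ∈ normalSpan F y z := by
  rw [h.prod_map_y_eq_of_perm (List.perm_insertionSort (· ≤ ·) l).symm,
    h.prod_map_z_eq_of_perm (List.perm_insertionSort (· ≤ ·) m).symm]
  exact Submodule.subset_span
    ⟨.inl ⟨_, _, List.pairwise_insertionSort _ _, List.pairwise_insertionSort _ _⟩, rfl⟩

lemma word_mul_lie_mem_normalSpan (h : UTStarRelations y z) (l m : List ℕ) (a b : ℕ) :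
    (l.map y).prod * (m.map z).prod * ⁅y a, z b⁆ ∈ normalSpan F y z := by
  obtain ⟨n, q, hn⟩ : ∃ n q, (b :: m).insertionSort (· ≤ ·) = n ++ [q] := by
    rcases List.eq_nil_or_concat ((b :: m).insertionSort (· ≤ ·)) with h0 | ⟨n, q, hq⟩
    · simpa [h0] using (List.perm_insertionSort (· ≤ ·) (b :: m)).length_eq
    · exact ⟨n, q, by simpa using hq⟩
  have hsorted : (n ++ [q]).Pairwise (· ≤ ·) := hn ▸ List.pairwise_insertionSort _ _
  have hperm : (b :: m).Perm (q :: n) :=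
    (List.perm_insertionSort _ _).symm.trans (hn ▸ List.perm_append_singleton q n)
  rw [h.prod_map_y_eq_of_perm (List.perm_insertionSort (· ≤ ·) l).symm, mul_assoc,
    h.prod_map_z_mul_lie_eq_of_perm hperm, ← mul_assoc]
  exact Submodule.subset_span
    ⟨.inr ⟨_, n, a, q, List.pairwise_insertionSort _ _, hsorted⟩, rfl⟩

lemma mul_lie_mem_normalSpan (h : UTStarRelations y z) {x : A} (hx : x ∈ normalSpan F y z)
    (a b : ℕ) : x * ⁅y a, z b⁆ ∈ normalSpan F y z := by
  refine mul_right_mem_span_range (fun t => ?_) hx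
  rcases t with t | t
  · exact h.word_mul_lie_mem_normalSpan _ _ _ _
  · simp only [normalWord, mul_assoc, h.lie_mul_lie, mul_zero]
    exact zero_mem _

lemma y_mul_mem_normalSpan (h : UTStarRelations y z) (k : ℕ) {x : A}
    (hx : x ∈ normalSpan F y z) : y k * x ∈ normalSpan F y z := by
  refine mul_left_mem_span_range (fun t => ?_) hx
  rcases t with t | t
  · simpa [normalWord, normalSpan, mul_assoc] using h.word_mem_normalSpan (k :: t.l) t.m
  · simpa [normalWord, normalSpan, mul_assoc] using
      h.word_mul_lie_mem_normalSpan (k :: t.l) t.m t.a t.b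

lemma z_mul_word_mem_normalSpan (h : UTStarRelations y z) (h2 : (2 : F) ≠ 0) (k : ℕ)
    (l m : List ℕ) : z k * ((l.map y).prod * (m.map z).prod) ∈ normalSpan F y z := by
  induction l with
  | nil => simpa using h.word_mem_normalSpan [] (k :: m)
  | cons j l ih =>
    have hc : Commute ⁅y j, z k⁆ (l.map y).prod :=
      Commute.list_prod_right _ _ fun x hx => by
        obtain ⟨i, -, rfl⟩ := List.mem_map.1 hx
        exact (h.commute_y_lie i j k).symm
    have key : z k * (((j :: l).map y).prod * (m.map z).prod) =
        y j * (z k * ((l.map y).prod * (m.map z).prod))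
          - (l.map y).prod * (⁅y j, z k⁆ * (m.map z).prod) := by
      rw [← mul_assoc (l.map y).prod, ← hc.eq, Ring.lie_def, List.map_cons, List.prod_cons]
      noncomm_ring
    rw [key, h.lie_mul_prod_map_z h2, mul_smul_comm, ← mul_assoc (l.map y).prod]
    exact sub_mem (h.y_mul_mem_normalSpan j ih)
      (Submodule.smul_mem _ _ (h.word_mul_lie_mem_normalSpan l m j k))

lemma z_mul_mem_normalSpan (h : UTStarRelations y z) (h2 : (2 : F) ≠ 0) (k : ℕ) {x : A}
    (hx : x ∈ normalSpan F y z) : z k * x ∈ normalSpan F y z := by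
  refine mul_left_mem_span_range (fun t => ?_) hx
  rcases t with t | t
  · exact h.z_mul_word_mem_normalSpan h2 k t.l t.m
  · rw [normalWord, ← mul_assoc, ← mul_assoc, mul_assoc (z k)]
    exact h.mul_lie_mem_normalSpan (h.z_mul_word_mem_normalSpan h2 k t.l t.m) t.a t.b

end UTStarRelations

theorem map_mem_normalSpan {π : FA F →ₐ[F] A} (h : UTStarRelations (π ∘ yv F) (π ∘ zv F))
    (h2 : (2 : F) ≠ 0) (f : FA F) : π f ∈ normalSpan F (π ∘ yv F) (π ∘ zv F) := by
  suffices ∀ g ∈ normalSpan F (π ∘ yv F) (π ∘ zv F),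
      π f * g ∈ normalSpan F (π ∘ yv F) (π ∘ zv F) by
    simpa using this 1 (Submodule.subset_span ⟨.inl ⟨[], [], .nil, .nil⟩, by simp [normalWord]⟩)
  induction f using FreeAlgebra.induction with
  | grade0 r => exact fun g hg => by simpa [Algebra.smul_def] using Submodule.smul_mem _ r hg
  | grade1 x =>
    rcases x with i | i
    · exact fun _ => h.y_mul_mem_normalSpan i
    · exact fun _ => h.z_mul_mem_normalSpan h2 i
  | mul a b ha hb => exact fun g hg => by rw [map_mul, mul_assoc]; exact ha _ (hb g hg)
  | add a b ha hb => exact fun g hg => by rw [map_add, add_mul]; exact add_mem (ha g hg) (hb g hg)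

theorem utStarRelations_of_map_starGenerators {π : FA F →ₐ[F] A}
    (hπ : ∀ a ∈ starGenerators F, π a = 0) : UTStarRelations (π ∘ yv F) (π ∘ zv F) := by
  have hcomm : ∀ {u v : FA F}, u * v - v * u ∈ starGenerators F → Commute (π u) (π v) :=
    fun hg => sub_eq_zero.1 (by simpa using hπ _ hg)
  refine ⟨fun i j => hcomm (Or.inl ⟨_, _, isSym_yv i, isSym_yv j, rfl⟩),
    fun i j => hcomm (Or.inr (Or.inl ⟨_, _, isSkew_zv i, isSkew_zv j, rfl⟩)),
    fun k i j => ?_, fun k i j => ?_, fun i j k l => ?_, fun k i j => ?_⟩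
  · simpa [Ring.lie_def] using hcomm (Or.inl ⟨_, _, isSym_yv k, isSym_lie_yv_zv i j, rfl⟩)
  · simpa using hcomm (Or.inl ⟨_, _, isSym_yv k, isSym_zv_mul_zv_add i j, rfl⟩)
  · simpa [Ring.lie_def] using hπ _ (Or.inr (Or.inr (Or.inl
      ⟨_, _, _, _, isSym_yv i, isSym_yv k, isSkew_zv j, isSkew_zv l, rfl⟩)))
  · simpa [sub_eq_zero] using hπ _ (Or.inr (Or.inr (Or.inr
      ⟨_, _, _, isSym_yv i, isSkew_zv k, isSkew_zv j, rfl⟩)))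

end NormalForm

section GenericSubstitution

open MvPolynomial

variable {F : Type*} [Field F]

variable (F) in
/-- `X (0, i)`, `X (1, i)`, `X (2, i)` play the roles of `a_i`, `b_i`, `c_i` in the generic
symmetric matrices `(a_i c_i; 0 a_i)` and skew matrices `(b_i 0; 0 -b_i)`. -/
abbrev GenericPoly := MvPolynomial (Fin 3 × ℕ) F

variable (F) in
noncomputable def genericY (i : ℕ) : Matrix (Fin 2) (Fin 2) (GenericPoly F) :=
  !![X (0, i), X (2, i); 0, X (0, i)]

variable (F) in
noncomputable def genericZ (i : ℕ) : Matrix (Fin 2) (Fin 2) (GenericPoly F) :=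
  !![X (1, i), 0; 0, -X (1, i)]

variable (F) in
noncomputable def genericSubst : FA F →ₐ[F] Matrix (Fin 2) (Fin 2) (GenericPoly F) :=
  FreeAlgebra.lift F (Sum.elim (genericY F) (genericZ F))

variable (F) in
noncomputable def genericDiag : FA F →ₐ[F] GenericPoly F :=
  FreeAlgebra.lift F (Sum.elim (fun i => X (0, i)) (fun i => X (1, i)))

noncomputable def pointSubst (v : Fin 3 × ℕ → F) : FA F →ₐ[F] UT2 F :=
  FreeAlgebra.lift F (Sum.elim
    (fun i => ⟨!![v (0, i), v (2, i); 0, v (0, i)], by simp [mem_UT2]⟩)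
    (fun i => ⟨!![v (1, i), 0; 0, -v (1, i)], by simp [mem_UT2]⟩))

lemma genericSubst_apply_zero_zero (f : FA F) : genericSubst F f 0 0 = genericDiag F f := by
  suffices genericSubst F f 1 0 = 0 ∧ genericSubst F f 0 0 = genericDiag F f from this.2
  induction f using FreeAlgebra.induction with
  | grade0 r => simp [Matrix.algebraMap_matrix_apply]
  | grade1 x => rcases x with i | i <;> simp [genericSubst, genericDiag, genericY, genericZ]
  | mul a b ha hb => simp [Matrix.mul_apply, Fin.sum_univ_two, ha.1, ha.2, hb.1, hb.2]
  | add a b ha hb => simp [ha.1, ha.2, hb.1, hb.2]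

lemma isSubstWith_pointSubst (v : Fin 3 × ℕ → F) :
    IsSubstWith F (starUT F) (pointSubst v) :=
  ⟨fun i => UT2.ext_of_entries (by simp [pointSubst, yv, starUT])
      (by simp [pointSubst, yv, starUT]) (by simp [pointSubst, yv, starUT]),
    fun i => UT2.ext_of_entries (by simp [pointSubst, zv, starUT])
      (by simp [pointSubst, zv, starUT]) (by simp [pointSubst, zv, starUT])⟩

lemma pointSubst_val (v : Fin 3 × ℕ → F) (f : FA F) :
    (pointSubst v f).1 = (genericSubst F f).map (eval v) := by
  have : (UT2 F).val.comp (pointSubst v) = (aeval v).mapMatrix.comp (genericSubst F) := by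
    refine FreeAlgebra.hom_ext (funext fun x => ?_)
    ext i j
    rcases x with k | k <;> fin_cases i <;> fin_cases j <;>
      simp [pointSubst, genericSubst, genericY, genericZ]
  simpa [coe_aeval_eq_eval] using
    congrArg (fun φ : FA F →ₐ[F] Matrix (Fin 2) (Fin 2) F => φ f) this

lemma genericSubst_eq_zero_of_mem_IdWith [Infinite F] {f : FA F}
    (hf : f ∈ IdWith F (starUT F)) : genericSubst F f = 0 := by
  refine Matrix.ext fun i j => MvPolynomial.funext fun v => ?_
  have := congrArg (fun M : Matrix (Fin 2) (Fin 2) F => M i j)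
    ((pointSubst_val v f).symm.trans (congrArg Subtype.val (hf _ (isSubstWith_pointSubst v))))
  simpa using this

def monomialVars (l m r : List ℕ) : Multiset (Fin 3 × ℕ) :=
  (l : Multiset ℕ).map (0, ·) + (m : Multiset ℕ).map (1, ·) + (r : Multiset ℕ).map (2, ·)

lemma perm_of_monomialVars_eq {l m r l' m' r' : List ℕ}
    (h : monomialVars l m r = monomialVars l' m' r') : l.Perm l' ∧ m.Perm m' ∧ r.Perm r' := by
  have hc := fun k i => congrArg (Multiset.count (k, i)) h
  simp only [monomialVars, Multiset.count_add, Multiset.count_map_prodMk] at hc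
  refine ⟨List.perm_iff_count.2 fun i => ?_, List.perm_iff_count.2 fun i => ?_,
    List.perm_iff_count.2 fun i => ?_⟩
  · simpa using hc 0 i
  · simpa using hc 1 i
  · simpa using hc 2 i

lemma PlainIndex.injective_monomialVars :
    Function.Injective fun t : PlainIndex => monomialVars t.l t.m [] := fun t t' h =>
  have hp := perm_of_monomialVars_eq h
  PlainIndex.ext (hp.1.eq_of_pairwise' t.sorted_l t'.sorted_l)
    (hp.2.1.eq_of_pairwise' t.sorted_m t'.sorted_m)

lemma BracketIndex.injective_monomialVars :
    Function.Injective fun t : BracketIndex => monomialVars t.l (t.m ++ [t.b]) [t.a] := by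
  intro t t' h
  obtain ⟨hl, hmb, ha⟩ := perm_of_monomialVars_eq h
  obtain ⟨hm, hb⟩ := List.append_inj' (hmb.eq_of_pairwise' t.sorted_mb t'.sorted_mb) rfl
  exact BracketIndex.ext (hl.eq_of_pairwise' t.sorted_l t'.sorted_l) hm
    (by simpa using List.perm_singleton.1 ha) (by simpa using hb)

lemma prod_map_X_monomialVars (l m r : List ℕ) :
    ((monomialVars l m r).map X).prod = (l.map fun i => (X (0, i) : GenericPoly F)).prod *
      (m.map fun i => X (1, i)).prod * (r.map fun i => X (2, i)).prod := by
  simp [monomialVars, mul_assoc, Function.comp_def]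

lemma genericSubst_normalWord_inl_zero_zero (t : PlainIndex) :
    genericSubst F (normalWord (yv F) (zv F) (.inl t)) 0 0 =
      ((monomialVars t.l t.m []).map X).prod := by
  rw [genericSubst_apply_zero_zero, AlgHom.map_normalWord, prod_map_X_monomialVars]
  simp [normalWord, genericDiag, yv, zv, Function.comp_def]

lemma genericSubst_normalWord_inr_zero_zero (t : BracketIndex) :
    genericSubst F (normalWord (yv F) (zv F) (.inr t)) 0 0 = 0 := by
  rw [genericSubst_apply_zero_zero, AlgHom.map_normalWord]
  simp [normalWord, Ring.lie_def, mul_comm]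

lemma genericSubst_normalWord_inr_zero_one (t : BracketIndex) :
    genericSubst F (normalWord (yv F) (zv F) (.inr t)) 0 1 =
      (-2 : F) • ((monomialVars t.l (t.m ++ [t.b]) [t.a]).map X).prod := by
  set P := (t.l.map (yv F)).prod * (t.m.map (zv F)).prod
  have hP : genericSubst F P 0 0 =
      (t.l.map fun i => (X (0, i) : GenericPoly F)).prod * (t.m.map fun i => X (1, i)).prod := by
    simp [P, genericSubst_apply_zero_zero, map_list_prod, genericDiag, yv, zv, Function.comp_def]
  have hc : genericSubst F ⁅yv F t.a, zv F t.b⁆ = ⁅genericY F t.a, genericZ F t.b⁆ := by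
    simp [Ring.lie_def, genericSubst, yv, zv]
  rw [normalWord, map_mul, Matrix.mul_apply, Fin.sum_univ_two, hP, hc, prod_map_X_monomialVars]
  simp [genericY, genericZ, Ring.lie_def, Matrix.mul_apply, Fin.sum_univ_two, smul_eq_C_mul,
    map_ofNat]
  ring

theorem linearIndependent_genericSubst_normalWord (h2 : (2 : F) ≠ 0) :
    LinearIndependent F (genericSubst F ∘ normalWord (yv F) (zv F)) := by
  have hsplit : genericSubst F ∘ normalWord (yv F) (zv F) =
      Sum.elim (fun t => genericSubst F (normalWord (yv F) (zv F) (.inl t)))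
        (fun t => genericSubst F (normalWord (yv F) (zv F) (.inr t))) := by
    funext t
    rcases t with t | t <;> rfl
  rw [hsplit]
  refine LinearIndependent.sum_elim_of_map_eq_zero (Matrix.entryLinearMap F (GenericPoly F) 0 0)
    ?_ ?_ genericSubst_normalWord_inr_zero_zero
  · have h00 : Matrix.entryLinearMap F (GenericPoly F) 0 0 ∘
        (fun t => genericSubst F (normalWord (yv F) (zv F) (.inl t))) =
          (fun s => (s.map (X : _ → GenericPoly F)).prod) ∘
            fun t : PlainIndex => monomialVars t.l t.m [] :=
      funext genericSubst_normalWord_inl_zero_zero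
    rw [h00]
    exact (linearIndependent_prod_map_X (Fin 3 × ℕ) F).comp _ PlainIndex.injective_monomialVars
  · refine .of_comp (Matrix.entryLinearMap F (GenericPoly F) 0 1) ?_
    have h01 : Matrix.entryLinearMap F (GenericPoly F) 0 1 ∘
        (fun t => genericSubst F (normalWord (yv F) (zv F) (.inr t))) =
          (fun _ : BracketIndex => Units.mk0 (-2 : F) (neg_ne_zero.2 h2)) •
            ((fun s => (s.map (X : _ → GenericPoly F)).prod) ∘
              fun t : BracketIndex => monomialVars t.l (t.m ++ [t.b]) [t.a]) :=
      funext fun t => by simp [genericSubst_normalWord_inr_zero_one]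
    rw [h01]
    exact ((linearIndependent_prod_map_X (Fin 3 × ℕ) F).comp _
      BracketIndex.injective_monomialVars).units_smul _

end GenericSubstitution

theorem stmt_7 (F : Type*) [Field F] [Infinite F] (hchar : ringChar F ≠ 2) :
    ∀ f : FA F, f ∈ IdWith F (starUT F) ↔
      f ∈ TwoSidedIdeal.span {a : FA F |
        (∃ g₁ g₂, IsSym F g₁ ∧ IsSym F g₂ ∧ a = g₁ * g₂ - g₂ * g₁) ∨
        (∃ h₁ h₂, IsSkew F h₁ ∧ IsSkew F h₂ ∧ a = h₁ * h₂ - h₂ * h₁) ∨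
        (∃ g₁ g₂ h₁ h₂, IsSym F g₁ ∧ IsSym F g₂ ∧ IsSkew F h₁ ∧ IsSkew F h₂ ∧
          a = (g₁ * h₁ - h₁ * g₁) * (g₂ * h₂ - h₂ * g₂)) ∨
        (∃ g₁ h₁ h₂, IsSym F g₁ ∧ IsSkew F h₁ ∧ IsSkew F h₂ ∧
          a = h₁ * g₁ * h₂ - h₂ * g₁ * h₁)} := by
  intro f
  have h2 : (2 : F) ≠ 0 := Ring.two_ne_zero hchar
  change f ∈ IdWith F (starUT F) ↔ f ∈ TwoSidedIdeal.span (starGenerators F)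
  refine ⟨fun hf => ?_, mem_IdWith_of_mem_span_starGenerators h2⟩
  set I := TwoSidedIdeal.span (starGenerators F)
  set π := I.ringCon.mkₐ F
  have hπ : ∀ a ∈ starGenerators F, π a = 0 :=
    fun a ha => I.mkₐ_eq_zero_iff.2 (TwoSidedIdeal.subset_span ha)
  obtain ⟨c, hc⟩ : π f ∈ LinearMap.range
      (Finsupp.linearCombination F (π ∘ normalWord (yv F) (zv F))) := by
    have hw : π ∘ normalWord (yv F) (zv F) = normalWord (π ∘ yv F) (π ∘ zv F) :=
      funext (π.map_normalWord (yv F) (zv F))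
    rw [Finsupp.range_linearCombination, hw]
    exact map_mem_normalSpan (utStarRelations_of_map_starGenerators hπ) h2 f
  set g := Finsupp.linearCombination F (normalWord (yv F) (zv F)) c
  have hfg : f - g ∈ I := by
    rw [← I.mkₐ_eq_zero_iff (F := F), map_sub, ← hc]
    exact sub_eq_zero.2 (Finsupp.apply_linearCombination F π.toLinearMap _ c).symm
  have hg : genericSubst F g = 0 := by
    have := genericSubst_eq_zero_of_mem_IdWith (mem_IdWith_of_mem_span_starGenerators h2 hfg)
    rwa [map_sub, genericSubst_eq_zero_of_mem_IdWith hf, zero_sub, neg_eq_zero] at this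
  have hc0 : c = 0 := linearIndependent_iff.1 (linearIndependent_genericSubst_normalWord h2) c <|
    (Finsupp.apply_linearCombination F (genericSubst F).toLinearMap _ c).symm.trans hg
  simpa [g, hc0] using hfg
end

section
/- Let F be a field with char(F) = p > 2. If Y ∈ UT_2(F) is symmetric for ⋆, then Y^p lies in the center Z(UT_2(F)). -/
open scoped BigOperators

set_option maxHeartbeats 1000000
set_option synthInstance.maxHeartbeats 400000

/-! A `⋆`-symmetric `Y` has equal diagonal entries, so `Y = a • 1 + N` with `N` strictly upper
triangular, hence `N ^ 2 = 0`. As `a • 1` is central, `(a • 1 + N) ^ p = a ^ p • 1 + p • a ^ (p - 1) • N`,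
and the second term vanishes in characteristic `p`. -/

theorem Commute.add_pow_of_sq_eq_zero {R : Type*} [Semiring R] {c n : R} (h : Commute c n)
    (hn : n ^ 2 = 0) (k : ℕ) : (c + n) ^ (k + 1) = c ^ (k + 1) + (k + 1) * c ^ k * n := by
  induction k with
  | zero => simp
  | succ k ih =>
    have hnn : n * n = 0 := by rwa [← sq]
    calc (c + n) ^ (k + 1 + 1) = (c ^ (k + 1) + (k + 1) * c ^ k * n) * (c + n) := by
          rw [pow_succ, ih]
      _ = c ^ (k + 1) * c + c ^ (k + 1) * n + (k + 1) * (c ^ k * c) * n := by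
        rw [add_mul, mul_add, mul_add, mul_assoc _ n n, hnn, mul_zero, add_zero, mul_assoc _ n c,
          ← h.eq, ← mul_assoc, mul_assoc _ (c ^ k) c]
      _ = c ^ (k + 1 + 1) + (↑(k + 1) + 1) * c ^ (k + 1) * n := by
        simp only [← pow_succ, Nat.cast_succ, add_mul, one_mul]
        abel

theorem Commute.add_pow_char_of_sq_eq_zero {R : Type*} [Semiring R] (p : ℕ) [CharP R p]
    {c n : R} (h : Commute c n) (hn : n ^ 2 = 0) : (c + n) ^ p = c ^ p := by
  cases p with
  | zero => simp
  | succ k => rw [h.add_pow_of_sq_eq_zero hn, ← Nat.cast_succ, CharP.cast_eq_zero, zero_mul,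
      zero_mul, add_zero]

theorem sq_sub_algebraMap_eq_zero_of_starUT_eq_self {F : Type*} [Field F] {Y : ↥(UT2 F)}
    (hY : starUT F Y = Y) : (Y - algebraMap F ↥(UT2 F) (Y.1 0 0)) ^ 2 = 0 := by
  have hdiag : Y.1 1 1 = Y.1 0 0 := by simpa [starUT] using congrArg (fun M => M.1 0 0) hY
  have hlow : Y.1 1 0 = 0 := Y.2
  apply Subtype.ext
  ext i j
  fin_cases i <;> fin_cases j <;>
    simp [sq, Matrix.mul_apply, Fin.sum_univ_two, Algebra.algebraMap_eq_smul_one, Matrix.one_apply,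
      hlow, hdiag]

theorem stmt_9_general (F : Type*) [Field F] (p : ℕ) [CharP F p]
    (Y : ↥(UT2 F)) (hY : starUT F Y = Y) :
    Y ^ p ∈ Subalgebra.center F ↥(UT2 F) := by
  have : CharP ↥(UT2 F) p := charP_of_injective_algebraMap (algebraMap F ↥(UT2 F)).injective p
  rw [← add_sub_cancel (algebraMap F ↥(UT2 F) (Y.1 0 0)) Y,
    (Algebra.commute_algebraMap_left _ _).add_pow_char_of_sq_eq_zero p
      (sq_sub_algebraMap_eq_zero_of_starUT_eq_self hY), ← map_pow]
  exact Subalgebra.algebraMap_mem _ _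

theorem stmt_9 (F : Type*) [Field F] (p : ℕ) [CharP F p] (hp : 2 < p)
    (Y : ↥(UT2 F)) (hY : starUT F Y = Y) :
    Y ^ p ∈ Subalgebra.center F ↥(UT2 F) :=
  stmt_9_general F p Y hY
end

section
/- Let F be a finite field with |F| = q elements and char(F) ≠ 2, and let l ≥ 0 be an integer. For all Y_1, Y_2 ∈ UT_2(F) symmetric for ⋆, the element l·Y_1(Y_2^{q+l−1} − Y_2^l) + Y_1^q Y_2^l lies in the center Z(UT_2(F)) (where l acts via the natural map ℕ → F). -/
open scoped BigOperators

set_option maxHeartbeats 1000000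
set_option synthInstance.maxHeartbeats 400000

/-!
The `⋆`-symmetric elements `(a c; 0 a)` of `UT2 F` are the image of the dual numbers `F[ε]` under
`ε ↦ (0 1; 0 0)`. In the commutative ring `F[ε]` every `x` satisfies `x ^ q = x.fst`: the Frobenius
fixes `x.fst` and the `ε`-part of `x ^ q` is `q x.fst ^ (q - 1) x.snd = 0`. With this the polynomial
evaluates to the scalar `x.fst * y.fst ^ l`, which is central.
-/

open DualNumber TrivSqZeroExt

namespace DualNumber

variable {F : Type*} [Field F] [Fintype F]

theorem pow_card_eq_inl_fst (x : DualNumber F) : x ^ Fintype.card F = inl x.fst := by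
  ext
  · exact FiniteField.pow_card x.fst
  · simp [snd_pow, Nat.cast_card_eq_zero F]

theorem smul_mul_pow_sub_add_pow_card_mul_pow (l : ℕ) (x y : DualNumber F) :
    (l : F) • (x * (y ^ (Fintype.card F + l - 1) - y ^ l)) + x ^ Fintype.card F * y ^ l =
      inl (x.fst * y.fst ^ l) := by
  rw [pow_card_eq_inl_fst]
  rcases l with _ | k
  · simp
  have hdiff : y ^ (Fintype.card F + (k + 1) - 1) - y ^ (k + 1) = -(y ^ k * inr y.snd) := by
    rw [← add_assoc, Nat.add_sub_cancel, pow_add, pow_card_eq_inl_fst, pow_succ', ← sub_mul,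
      mul_comm, ← neg_sub, ← inl_fst_add_inr_snd_eq y]
    simp
  rw [hdiff]
  ext
  · simp
  · simp [snd_pow]
    ring

end DualNumber

noncomputable def dualNumberToUT2 (F : Type*) [Field F] : DualNumber F →ₐ[F] ↥(UT2 F) :=
  DualNumber.lift ⟨(Algebra.ofId F _, ⟨!![0, 1; 0, 0], rfl⟩),
    Subtype.ext (by ext i j; fin_cases i <;> fin_cases j <;> simp),
    fun a => (Algebra.commutes a _).symm⟩

theorem exists_dualNumberToUT2_eq {F : Type*} [Field F] {Y : ↥(UT2 F)} (hY : starUT F Y = Y) :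
    ∃ x, dualNumberToUT2 F x = Y := by
  have hdiag : Y.1 1 1 = Y.1 0 0 := by simpa [starUT] using congrArg (fun M => M.1 0 0) hY
  have hlow : Y.1 1 0 = 0 := Y.2
  refine ⟨inl (Y.1 0 0) + inr (Y.1 0 1), Subtype.ext ?_⟩
  ext i j
  fin_cases i <;> fin_cases j <;>
    simp [dualNumberToUT2, lift_apply_apply, Algebra.algebraMap_eq_smul_one, hdiag, hlow]

theorem stmt_12_general (F : Type*) [Field F] [Fintype F] (q : ℕ) (hq : Fintype.card F = q)
    (l : ℕ)
    (Y₁ Y₂ : ↥(UT2 F)) (h1 : starUT F Y₁ = Y₁) (h2 : starUT F Y₂ = Y₂) :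
    (l : F) • (Y₁ * (Y₂ ^ (q + l - 1) - Y₂ ^ l)) + Y₁ ^ q * Y₂ ^ l ∈
      Subalgebra.center F ↥(UT2 F) := by
  subst hq
  obtain ⟨x, rfl⟩ := exists_dualNumberToUT2_eq h1
  obtain ⟨y, rfl⟩ := exists_dualNumberToUT2_eq h2
  simp only [← map_pow, ← map_sub, ← map_mul, ← map_smul, ← map_add,
    smul_mul_pow_sub_add_pow_card_mul_pow]
  rw [← algebraMap_eq_inl, AlgHom.commutes]
  exact Subalgebra.algebraMap_mem _ _

theorem stmt_12 (F : Type*) [Field F] [Fintype F] (q : ℕ) (hq : Fintype.card F = q)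
    (hchar : ringChar F ≠ 2) (l : ℕ)
    (Y₁ Y₂ : ↥(UT2 F)) (h1 : starUT F Y₁ = Y₁) (h2 : starUT F Y₂ = Y₂) :
    (l : F) • (Y₁ * (Y₂ ^ (q + l - 1) - Y₂ ^ l)) + Y₁ ^ q * Y₂ ^ l ∈
      Subalgebra.center F ↥(UT2 F) :=
  stmt_12_general F q hq l Y₁ Y₂ h1 h2
end
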